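/- Let 𝕀 be a symmetric invertible 3×3 real matrix (the moment of inertia), let Δt > 0, and let Π, Π′, A, B ∈ ℝ³ satisfy one step of the deterministic rigid-body midpoint integrator: d⁺(Δt,ξ,A) = Π, d⁺(Δt,ξ,B) = d⁻(Δt,ξ,A), Π′ = d⁻(Δt,ξ,B), where ξ := (1/2)·𝕀⁻¹((A+B)/2). Then the kinetic energy is exactly conserved: Π′ · (𝕀⁻¹Π′) = Π · (𝕀⁻¹Π). -/

import Mathlib

/-!
Write `Π = d⁺(A)` and `Π' = d⁻(B)`. Since `d⁺ - d⁻ = Δt ξ×·` and the middle equation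
`d⁺(B) = d⁻(A)` links the two, `Π - Π' = Δt ξ × (A + B)`; the middle equation also makes
`Π + Π'` a multiple of `A + B`. As `𝕀⁻¹` is symmetric, the energy difference is
`(Π - Π') · 𝕀⁻¹(Π + Π')`, a multiple of `(ξ × (A + B)) · 𝕀⁻¹(A + B) = 4 (ξ × (A + B)) · ξ = 0`.
-/

open Matrix

noncomputable section

/-- `d⁺(h,ξ,Π) = Π + (h/2) ξ×Π − (h²/4)(ξ·Π)ξ`. -/
def dplus (h : ℝ) (ξ Pv : Fin 3 → ℝ) : Fin 3 → ℝ :=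
  Pv + (h / 2) • (ξ ⨯₃ Pv) - (h ^ 2 / 4 * (ξ ⬝ᵥ Pv)) • ξ

/-- `d⁻(h,ξ,Π) = Π − (h/2) ξ×Π − (h²/4)(ξ·Π)ξ`. -/
def dminus (h : ℝ) (ξ Pv : Fin 3 → ℝ) : Fin 3 → ℝ :=
  Pv - (h / 2) • (ξ ⨯₃ Pv) - (h ^ 2 / 4 * (ξ ⬝ᵥ Pv)) • ξ

namespace Matrix.IsSymm

variable {n R : Type*} [Fintype n] {M : Matrix n n R}

theorem dotProduct_mulVec_comm [CommSemiring R] (hM : M.IsSymm) (v w : n → R) :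
    v ⬝ᵥ M *ᵥ w = w ⬝ᵥ M *ᵥ v := by
  rw [dotProduct_mulVec, dotProduct_comm, ← mulVec_transpose, hM.eq]

theorem dotProduct_mulVec_sub_dotProduct_mulVec [CommRing R] (hM : M.IsSymm) (u v : n → R) :
    u ⬝ᵥ M *ᵥ u - v ⬝ᵥ M *ᵥ v = (u - v) ⬝ᵥ M *ᵥ (u + v) := by
  rw [mulVec_add, sub_dotProduct, dotProduct_add, dotProduct_add, hM.dotProduct_mulVec_comm u v]
  ring

end Matrix.IsSymm

theorem dplus_sub_dminus (h : ℝ) (ξ X : Fin 3 → ℝ) :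
    dplus h ξ X - dminus h ξ X = h • ξ ⨯₃ X := by
  unfold dplus dminus
  module

section MiddleEquation

variable {h : ℝ} {ξ A B : Fin 3 → ℝ} (hAB : dplus h ξ B = dminus h ξ A)
include hAB

theorem dplus_sub_dminus_of_dplus_eq_dminus :
    dplus h ξ A - dminus h ξ B = h • ξ ⨯₃ (A + B) := by
  calc dplus h ξ A - dminus h ξ B
      = (dplus h ξ A - dminus h ξ A) + (dplus h ξ B - dminus h ξ B) := by rw [hAB]; abel
    _ = h • ξ ⨯₃ (A + B) := by rw [dplus_sub_dminus, dplus_sub_dminus, map_add, smul_add]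

theorem sub_eq_of_dplus_eq_dminus :
    B - A = -(h / 2) • ξ ⨯₃ (A + B) + (h ^ 2 / 4 * (ξ ⬝ᵥ (B - A))) • ξ := by
  have hzero : dplus h ξ B - dminus h ξ A = 0 := sub_eq_zero.mpr hAB
  unfold dplus dminus at hzero
  rw [map_add, dotProduct_sub]
  linear_combination (norm := module) hzero

theorem dplus_add_dminus_of_dplus_eq_dminus :
    dplus h ξ A + dminus h ξ B = (1 - h ^ 2 / 4 * (ξ ⬝ᵥ ξ)) • (A + B) := by
  have hcross : ξ ⨯₃ (A - B) = (h / 2) • ((ξ ⬝ᵥ (A + B)) • ξ - (ξ ⬝ᵥ ξ) • (A + B)) := by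
    rw [← neg_sub, sub_eq_of_dplus_eq_dminus hAB, map_neg, map_add, map_smul, map_smul,
      cross_self, cross_cross_eq_smul_sub_smul']
    module
  calc dplus h ξ A + dminus h ξ B
      = A + B + (h / 2) • ξ ⨯₃ (A - B) - (h ^ 2 / 4 * (ξ ⬝ᵥ (A + B))) • ξ := by
        unfold dplus dminus
        rw [map_sub, dotProduct_add]
        module
    _ = (1 - h ^ 2 / 4 * (ξ ⬝ᵥ ξ)) • (A + B) := by
        rw [hcross]
        module

end MiddleEquation

theorem midpoint_step_conserves_energy_general
    (I : Matrix (Fin 3) (Fin 3) ℝ) (hIsymm : Iᵀ = I)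
    (Δt : ℝ) (ξ Pv Pv' A B : Fin 3 → ℝ)
    (hξ : ξ = (1 / 2 : ℝ) • I⁻¹.mulVec ((1 / 2 : ℝ) • (A + B)))
    (h1 : dplus Δt ξ A = Pv)
    (h2 : dplus Δt ξ B = dminus Δt ξ A)
    (h3 : Pv' = dminus Δt ξ B) :
    Pv' ⬝ᵥ I⁻¹.mulVec Pv' = Pv ⬝ᵥ I⁻¹.mulVec Pv := by
  have hsymm : I⁻¹.IsSymm := IsSymm.inv hIsymm
  have hvel : I⁻¹ *ᵥ (A + B) = (4 : ℝ) • ξ := by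
    rw [hξ, mulVec_smul]
    module
  have hdiff := dplus_sub_dminus_of_dplus_eq_dminus h2
  have hsum := dplus_add_dminus_of_dplus_eq_dminus h2
  rw [h1, ← h3] at hdiff hsum
  have hpairing : (Pv - Pv') ⬝ᵥ I⁻¹ *ᵥ (Pv + Pv') = 0 := by
    rw [hdiff, hsum, mulVec_smul, hvel, smul_dotProduct, dotProduct_smul, dotProduct_smul,
      dotProduct_comm (ξ ⨯₃ (A + B)), dot_self_cross, smul_zero, smul_zero, smul_zero]
  linear_combination -hsymm.dotProduct_mulVec_sub_dotProduct_mulVec Pv Pv' - hpairing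

/-- The deterministic rigid-body midpoint integrator (with midpoint body angular velocity
`ξ = (1/2)𝕀⁻¹((A+B)/2)`, `𝕀` the symmetric invertible moment of inertia matrix) exactly
conserves the kinetic energy `(1/2)Π·(𝕀⁻¹Π)`. -/
theorem midpoint_step_conserves_energy
    (I : Matrix (Fin 3) (Fin 3) ℝ) (hIsymm : Iᵀ = I) (hIinv : IsUnit I.det)
    (Δt : ℝ) (hΔt : 0 < Δt) (ξ Pv Pv' A B : Fin 3 → ℝ)
    (hξ : ξ = (1 / 2 : ℝ) • I⁻¹.mulVec ((1 / 2 : ℝ) • (A + B)))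
    (h1 : dplus Δt ξ A = Pv)
    (h2 : dplus Δt ξ B = dminus Δt ξ A)
    (h3 : Pv' = dminus Δt ξ B) :
    Pv' ⬝ᵥ I⁻¹.mulVec Pv' = Pv ⬝ᵥ I⁻¹.mulVec Pv :=
  midpoint_step_conserves_energy_general I hIsymm Δt ξ Pv Pv' A B hξ h1 h2 h3
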